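/- arXiv:2311.06873 — 3 statements merged into one kernel-verified Lean document; each statement's English description precedes it below -/
import Mathlib

section
/- Let P be a squarefree positive integer and T a finite subset of ℤ/Pℤ. Then the cardinality of the core C(T, U(P), P) = {x ∈ ℤ/Pℤ : ∀ t ∈ T, x + t is a unit of ℤ/Pℤ} equals the product over all primes p dividing P of (p − |T mod p|), where T mod p denotes the image of T under the natural projection ℤ/Pℤ → ℤ/pℤ. -/
/-!
By the Chinese remainder theorem, `ZMod P ≅ ∏_{p ∣ P} ZMod p` for squarefree `P`, and an element of
this product of fields is a unit iff all its coordinates are nonzero. So `x + t` is a unit for every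
`t ∈ T` iff, for each `p`, the coordinate `x mod p` avoids the `|T mod p|` values `-(t mod p)`; the
core is therefore a product of sets of sizes `p - |T mod p|`.
-/

open Finset

open scoped Pointwise

section ProductOfFields

variable {R ι : Type*} [CommRing R] {K : ι → Type*} [∀ i, Field (K i)]

theorem isUnit_iff_forall_ne_zero_of_ringEquiv_pi (φ : R ≃+* Π i, K i) (x : R) :
    IsUnit x ↔ ∀ i, φ x i ≠ 0 := by
  rw [← MulEquiv.isUnit_map φ, Pi.isUnit_iff]
  simp only [isUnit_iff_ne_zero]

theorem card_forall_isUnit_add_of_ringEquiv_pi [Fintype ι] [∀ i, Fintype (K i)]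
    [∀ i, DecidableEq (K i)] (φ : R ≃+* Π i, K i) (T : Finset R) :
    Nat.card {x : R // ∀ t ∈ T, IsUnit (x + t)} =
      ∏ i, (Fintype.card (K i) - #(T.image fun t => φ t i)) := by
  set S : ∀ i, Finset (K i) := fun i => -T.image fun t => φ t i
  have hcore : ∀ x, (∀ t ∈ T, IsUnit (x + t)) ↔ ∀ i, φ x i ∉ S i := by
    intro x
    simp only [isUnit_iff_forall_ne_zero_of_ringEquiv_pi φ, map_add, Pi.add_apply, S, mem_neg',
      mem_image, not_exists, not_and, ne_eq, add_eq_zero_iff_eq_neg']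
    exact ⟨fun h i t ht => h t ht i, fun h t ht i => h i t ht⟩
  rw [Nat.card_congr ((φ.toEquiv.subtypeEquiv (q := fun y => ∀ i, y i ∉ S i) hcore).trans
    (Equiv.subtypePiEquivPi (p := fun i b => b ∉ S i))), Nat.card_pi]
  refine prod_congr rfl fun i _ => ?_
  rw [Nat.card_eq_fintype_card, Fintype.card_subtype_compl, Fintype.card_coe, card_neg]

end ProductOfFields

namespace ZMod

instance fact_prime_of_mem_primeFactors {n : ℕ} (p : n.primeFactors) : Fact (p : ℕ).Prime :=
  ⟨Nat.prime_of_mem_primeFactors p.2⟩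

noncomputable def equivPiPrimeFactors {n : ℕ} (hn : Squarefree n) :
    ZMod n ≃+* Π p : n.primeFactors, ZMod p :=
  (ringEquivCongr ((prod_coe_sort n.primeFactors id).trans
      (Nat.prod_primeFactors_of_squarefree hn)).symm).trans
    (prodEquivPi (fun p : n.primeFactors => (p : ℕ)) fun _ _ hpq =>
      (Nat.coprime_primes Fact.out Fact.out).mpr (Subtype.coe_ne_coe.mpr hpq))

theorem equivPiPrimeFactors_apply {n : ℕ} (hn : Squarefree n) (z : ZMod n) (p : n.primeFactors) :
    equivPiPrimeFactors hn z p = cast z :=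
  RingHom.congr_fun
    (Subsingleton.elim ((Pi.evalRingHom _ p).comp (equivPiPrimeFactors hn).toRingHom)
      (castHom (Nat.dvd_of_mem_primeFactors p.2) _)) z

end ZMod

theorem core_card_squarefree_general (P : ℕ) (hsf : Squarefree P)
    (T : Finset (ZMod P)) :
    Nat.card {x : ZMod P // ∀ t ∈ T, IsUnit (x + t)} =
      ∏ p ∈ P.primeFactors,
        (p - (T.image (fun t : ZMod P => ((t.val : ℕ) : ZMod p))).card) := by
  have : NeZero P := ⟨hsf.ne_zero⟩
  rw [card_forall_isUnit_add_of_ringEquiv_pi (ZMod.equivPiPrimeFactors hsf),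
    ← prod_coe_sort P.primeFactors]
  simp only [ZMod.card, ZMod.equivPiPrimeFactors_apply, ZMod.cast_eq_val]

theorem core_card_squarefree (P : ℕ) (hP : 0 < P) (hsf : Squarefree P)
    (T : Finset (ZMod P)) :
    Nat.card {x : ZMod P // ∀ t ∈ T, IsUnit (x + t)} =
      ∏ p ∈ P.primeFactors,
        (p - (T.image (fun t : ZMod P => ((t.val : ℕ) : ZMod p))).card) :=
  core_card_squarefree_general P hsf T
end

section
/- Let p be a prime with p ≥ 3 and P = p#. The number of x ∈ ℤ/Pℤ such that x and x + 4 are both units of ℤ/Pℤ but x + 2 is not a unit equals the product over primes q with 3 ≤ q ≤ p of (q − 2). (This is K(4, P), the number of gaps of length 4 in U(P).) -/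
/-!
Modulo 3 the residues of x, x + 2, x + 4 are 0, 1, 2 in some order, so once 3 ∣ P the condition
that x + 2 is not a unit follows from x and x + 4 being units. By the Chinese remainder theorem the
number of x with x and x + 4 both units is then the product, over the primes q ≤ p, of the number
of y ∈ ℤ/qℤ avoiding 0 and -4: that is q - 2 for odd q and 1 for q = 2.
-/

open Finset Function

theorem RingEquiv.card_isUnit_and_isUnit_add {R S : Type*} [Semiring R] [Semiring S]
    (e : R ≃+* S) (a : R) :
    Nat.card {x : R // IsUnit x ∧ IsUnit (x + a)} =
      Nat.card {y : S // IsUnit y ∧ IsUnit (y + e a)} :=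
  Nat.card_congr <| e.toEquiv.subtypeEquiv fun x => by
    simp only [RingEquiv.toEquiv_eq_coe, EquivLike.coe_coe, ← map_add, MulEquiv.isUnit_map]

theorem Pi.card_isUnit_and_isUnit_add {ι : Type*} [Fintype ι] {S : ι → Type*}
    [∀ i, Semiring (S i)] (a : ∀ i, S i) :
    Nat.card {f : ∀ i, S i // IsUnit f ∧ IsUnit (f + a)} =
      ∏ i, Nat.card {y : S i // IsUnit y ∧ IsUnit (y + a i)} := by
  rw [← Nat.card_pi]
  refine Nat.card_congr ((Equiv.subtypeEquivRight fun f => ?_).trans Equiv.subtypePiEquivPi)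
  simp only [Pi.isUnit_iff, Pi.add_apply, forall_and]

theorem card_isUnit_and_isUnit_add_of_ne_zero {F : Type*} [Field F] [Finite F] {a : F}
    (ha : a ≠ 0) : Nat.card {y : F // IsUnit y ∧ IsUnit (y + a)} = Nat.card F - 2 := by
  classical
  have : Fintype F := Fintype.ofFinite F
  have hpair : ({0, -a} : Finset F).card = 2 := card_pair (by simpa using ha)
  calc Nat.card {y : F // IsUnit y ∧ IsUnit (y + a)}
      = Nat.card (({0, -a} : Finset F)ᶜ : Finset F) :=
        Nat.card_congr <| Equiv.subtypeEquivRight fun y => by simp [add_eq_zero_iff_eq_neg]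
    _ = Nat.card F - 2 := by
        rw [Nat.card_eq_fintype_card, Fintype.card_coe, card_compl, hpair,
          Nat.card_eq_fintype_card]

theorem ZMod.card_isUnit_and_isUnit_add_prod {ι : Type*} [Fintype ι] (m : ι → ℕ)
    (hm : Pairwise (Nat.Coprime on m)) (a : ℕ) :
    Nat.card {x : ZMod (∏ i, m i) // IsUnit x ∧ IsUnit (x + a)} =
      ∏ i, Nat.card {y : ZMod (m i) // IsUnit y ∧ IsUnit (y + a)} := by
  rw [(ZMod.prodEquivPi m hm).card_isUnit_and_isUnit_add, Pi.card_isUnit_and_isUnit_add]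
  simp

theorem ZMod.card_isUnit_and_isUnit_add_four {q : ℕ} (hq : q.Prime) :
    Nat.card {y : ZMod q // IsUnit y ∧ IsUnit (y + 4)} = if 3 ≤ q then q - 2 else 1 := by
  split_ifs with h3
  · have : Fact q.Prime := ⟨hq⟩
    have h4 : (4 : ZMod q) ≠ 0 := by
      intro h4
      have hq4 : q ∣ 2 ^ 2 := (ZMod.natCast_eq_zero_iff _ _).1 (by exact_mod_cast h4)
      have := Nat.le_of_dvd two_pos (hq.dvd_of_dvd_pow hq4)
      omega
    rw [card_isUnit_and_isUnit_add_of_ne_zero h4, Nat.card_zmod]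
  · obtain rfl : q = 2 := by have := hq.two_le; omega
    rw [Nat.card_eq_fintype_card]
    decide

theorem ZMod.not_isUnit_add_two_of_three_dvd {n : ℕ} (h3 : 3 ∣ n) {x : ZMod n} (hx : IsUnit x)
    (hx4 : IsUnit (x + 4)) : ¬IsUnit (x + 2) := by
  intro hx2
  have key : ∀ y : ZMod 3, IsUnit y → IsUnit (y + 4) → ¬IsUnit (y + 2) := by decide
  set f := ZMod.castHom h3 (ZMod 3)
  have hfx4 := hx4.map f
  have hfx2 := hx2.map f
  rw [map_add, map_ofNat] at hfx4 hfx2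
  exact key (f x) (hx.map f) hfx4 hfx2

theorem K4_formula_general (p : ℕ) (hp3 : 3 ≤ p) (P : ℕ) (hP : P = primorial p) :
    Nat.card {x : ZMod P // IsUnit x ∧ IsUnit (x + 4) ∧ ¬IsUnit (x + 2)} =
      ∏ q ∈ (Finset.range (p + 1)).filter (fun q => q.Prime ∧ 3 ≤ q), (q - 2) := by
  set s := (range (p + 1)).filter Nat.Prime
  have hprime (q : s) : (q : ℕ).Prime := (mem_filter.1 q.2).2
  have hcop : Pairwise (Nat.Coprime on fun q : s => (q : ℕ)) := fun q r hqr =>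
    (Nat.coprime_primes (hprime q) (hprime r)).2 (Subtype.coe_injective.ne hqr)
  have h3 : 3 ∣ P := by
    rw [hP]
    exact dvd_prod_of_mem _ (mem_filter.2 ⟨mem_range.2 (by omega), Nat.prime_three⟩)
  have hPs : P = ∏ q : s, (q : ℕ) := by
    rw [hP, primorial]
    exact (prod_coe_sort s fun q => q).symm
  calc Nat.card {x : ZMod P // IsUnit x ∧ IsUnit (x + 4) ∧ ¬IsUnit (x + 2)}
      = Nat.card {x : ZMod P // IsUnit x ∧ IsUnit (x + (4 : ℕ))} := by
        rw [Nat.cast_ofNat]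
        exact Nat.card_congr <| Equiv.subtypeEquivRight fun x => and_congr_right fun hx =>
          and_iff_left_of_imp (ZMod.not_isUnit_add_two_of_three_dvd h3 hx)
    _ = ∏ q : s, Nat.card {y : ZMod q // IsUnit y ∧ IsUnit (y + (4 : ℕ))} := by
        rw [hPs, ZMod.card_isUnit_and_isUnit_add_prod _ hcop]
    _ = ∏ q ∈ s, if 3 ≤ q then q - 2 else 1 := by
        rw [← prod_coe_sort s]
        refine prod_congr rfl fun q _ => ?_
        rw [Nat.cast_ofNat, ZMod.card_isUnit_and_isUnit_add_four (hprime q)]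
    _ = _ := by rw [prod_ite, prod_const_one, mul_one, filter_filter]

theorem K4_formula (p : ℕ) (hp : p.Prime) (hp3 : 3 ≤ p) (P : ℕ) (hP : P = primorial p) :
    Nat.card {x : ZMod P // IsUnit x ∧ IsUnit (x + 4) ∧ ¬IsUnit (x + 2)} =
      ∏ q ∈ (Finset.range (p + 1)).filter (fun q => q.Prime ∧ 3 ≤ q), (q - 2) :=
  K4_formula_general p hp3 P hP
end

section
/- Let p be a prime with p ≥ 5 and P = p#. The number of x ∈ ℤ/Pℤ such that x and x + 6 are units of ℤ/Pℤ while x + 2 and x + 4 are not units equals 2·Π_{5 ≤ q ≤ p, q prime}(q − 2) − 2·Π_{5 ≤ q ≤ p, q prime}(q − 3). -/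
open Finset

private lemma isUnit_prod {M N : Type*} [Monoid M] [Monoid N] {x : M × N} :
    IsUnit x ↔ IsUnit x.1 ∧ IsUnit x.2 := by
  constructor
  · intro h; exact ⟨h.map (MonoidHom.fst M N), h.map (MonoidHom.snd M N)⟩
  · rintro ⟨⟨u, hu⟩, ⟨v, hv⟩⟩
    exact ⟨⟨(u, v), (↑u⁻¹, ↑v⁻¹), by ext <;> simp, by ext <;> simp⟩,
      by simp [Prod.ext_iff, hu, hv]⟩

private noncomputable def cnt (S : Finset ℕ) (n : ℕ) : ℕ :=
  Nat.card {x : ZMod n // ∀ s ∈ S, IsUnit (x + (s : ZMod n))}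

private lemma cnt_one (S : Finset ℕ) : cnt S 1 = 1 := by
  have h : ∀ x : ZMod 1, ∀ s ∈ S, IsUnit (x + (s : ZMod 1)) := by
    intro x s _; exact isUnit_of_subsingleton _
  unfold cnt
  rw [Nat.card_congr (Equiv.subtypeUnivEquiv h)]
  simp

private lemma cnt_mul (S : Finset ℕ) {m n : ℕ} (h : m.Coprime n) :
    cnt S (m * n) = cnt S m * cnt S n := by
  let e := ZMod.chineseRemainder h
  unfold cnt
  rw [← Nat.card_prod]
  apply Nat.card_congr
  refine (Equiv.subtypeEquiv e.toEquiv
      (q := fun y : ZMod m × ZMod n => ∀ s ∈ S, IsUnit (y + (s : ZMod m × ZMod n))) ?_).trans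
    ((Equiv.subtypeEquivRight
      (q := fun y : ZMod m × ZMod n => (∀ s ∈ S, IsUnit (y.1 + (s : ZMod m)))
        ∧ ∀ s ∈ S, IsUnit (y.2 + (s : ZMod n))) ?_).trans (Equiv.subtypeProdEquivProd
      (p := fun a : ZMod m => ∀ s ∈ S, IsUnit (a + (s : ZMod m)))
      (q := fun b : ZMod n => ∀ s ∈ S, IsUnit (b + (s : ZMod n)))))
  · intro x
    constructor
    · intro hx s hs
      have := (hx s hs).map e
      rwa [map_add, map_natCast] at this
    · intro hx s hs
      have := (hx s hs).map e.symm
      simp only [map_add, map_natCast, RingEquiv.toEquiv_eq_coe, EquivLike.coe_coe] at this ⊢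
      rwa [RingEquiv.symm_apply_apply] at this
  · intro y
    constructor
    · intro hy
      constructor <;> intro s hs
      · have := (isUnit_prod.mp (hy s hs)).1
        simpa using this
      · have := (isUnit_prod.mp (hy s hs)).2
        simpa using this
    · rintro ⟨h1, h2⟩ s hs
      refine isUnit_prod.mpr ⟨?_, ?_⟩
      · simpa using h1 s hs
      · simpa using h2 s hs

private lemma cnt_prime {q : ℕ} (hq : q.Prime) (S : Finset ℕ) :
    cnt S q = q - (S.image (fun s : ℕ => (s : ZMod q))).card := by
  haveI := Fact.mk hq
  unfold cnt
  rw [Nat.card_eq_fintype_card, Fintype.card_subtype]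
  have key : filter (fun x : ZMod q => ∀ s ∈ S, IsUnit (x + (s : ZMod q))) univ
      = univ \ (S.image (fun s : ℕ => -(s : ZMod q))) := by
    ext x
    simp only [mem_filter, mem_univ, true_and, mem_sdiff, mem_image, not_exists]
    constructor
    · intro hx
      push_neg
      intro s hs he
      have := hx s hs
      rw [← he] at this
      simp [isUnit_iff_ne_zero] at this
    · intro hx s hs
      rw [isUnit_iff_ne_zero]
      intro h0
      exact (hx s) ⟨hs, by linear_combination (norm := ring_nf) -h0⟩
  rw [key, card_sdiff_of_subset (subset_univ _), card_univ, ZMod.card]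
  congr 1
  have h2 : (fun s : ℕ => -(s : ZMod q)) = (fun y : ZMod q => -y) ∘ (fun s : ℕ => (s : ZMod q)) := rfl
  rw [h2, ← Finset.image_image, Finset.card_image_of_injective _ neg_injective]

private lemma resid_inj {q : ℕ} (hq : q.Prime) (h5 : 5 ≤ q) {s t : ℕ}
    (hs6 : s ≤ 6) (ht6 : t ≤ 6) (hse : 2 ∣ s) (hte : 2 ∣ t)
    (h : (s : ZMod q) = (t : ZMod q)) : s = t := by
  rw [ZMod.natCast_eq_natCast_iff] at h
  rcases le_total s t with hst | hst
  · have hd : q ∣ t - s := (Nat.modEq_iff_dvd' hst).mp h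
    rcases Nat.eq_zero_or_pos (t - s) with h0 | hpos
    · omega
    · have hle := Nat.le_of_dvd hpos hd
      have hq6 : q ≤ 6 := by omega
      interval_cases q <;> first | exact absurd hq (by decide) | omega
  · have hd : q ∣ s - t := (Nat.modEq_iff_dvd' hst).mp h.symm
    rcases Nat.eq_zero_or_pos (s - t) with h0 | hpos
    · omega
    · have hle := Nat.le_of_dvd hpos hd
      have hq6 : q ≤ 6 := by omega
      interval_cases q <;> first | exact absurd hq (by decide) | omega

private lemma card_image_resid {q : ℕ} (hq : q.Prime) (h5 : 5 ≤ q) (S : Finset ℕ)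
    (hS : S ⊆ {0, 2, 4, 6}) :
    (S.image (fun s : ℕ => (s : ZMod q))).card = S.card := by
  apply Finset.card_image_of_injOn
  intro s hs t ht h
  have hs' := hS hs
  have ht' := hS ht
  simp only [mem_insert, mem_singleton] at hs' ht'
  exact resid_inj hq h5 (by omega) (by omega) (by omega) (by omega) h

private lemma cnt_prod (S : Finset ℕ) (T : Finset ℕ) :
    (∀ q ∈ T, q.Prime) → cnt S (∏ q ∈ T, q) = ∏ q ∈ T, cnt S q := by
  classical
  induction T using Finset.induction_on with
  | empty => intro _; simpa using cnt_one S
  | @insert a T ha ih =>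
    intro hT
    have hap : a.Prime := hT a (mem_insert_self a T)
    have hco : a.Coprime (∏ q ∈ T, q) := by
      apply Nat.Coprime.prod_right
      intro q hq
      exact (Nat.coprime_primes hap (hT q (mem_insert_of_mem hq))).mpr
        (fun he => ha (he ▸ hq))
    rw [prod_insert ha, prod_insert ha, cnt_mul S hco,
      ih (fun q hq => hT q (mem_insert_of_mem hq))]

set_option maxHeartbeats 2000000 in
theorem K6_formula (p : ℕ) (hp : p.Prime) (hp5 : 5 ≤ p) (P : ℕ) (hP : P = primorial p) :
    (Nat.card {x : ZMod P // IsUnit x ∧ IsUnit (x + 6) ∧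
        ¬IsUnit (x + 2) ∧ ¬IsUnit (x + 4)} : ℤ) =
      2 * ∏ q ∈ (Finset.range (p + 1)).filter (fun q => q.Prime ∧ 5 ≤ q), ((q : ℤ) - 2) -
      2 * ∏ q ∈ (Finset.range (p + 1)).filter (fun q => q.Prime ∧ 5 ≤ q), ((q : ℤ) - 3) := by
  classical
  have hPpos : 0 < P := hP ▸ primorial_pos p
  haveI : NeZero P := ⟨hPpos.ne'⟩
  set R : Finset ℕ := (Finset.range (p + 1)).filter Nat.Prime with hR
  set R5 : Finset ℕ := (Finset.range (p + 1)).filter (fun q => q.Prime ∧ 5 ≤ q) with hR5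
  -- product formula for cnt
  have hprod : ∀ S : Finset ℕ, cnt S P = ∏ q ∈ R, cnt S q := by
    intro S
    rw [hP, primorial]
    exact cnt_prod S R (fun q hq => (mem_filter.mp hq).2)
  -- split R
  have h2R5 : (2 : ℕ) ∉ insert 3 R5 := by simp [hR5, mem_filter]
  have h3R5 : (3 : ℕ) ∉ R5 := by simp [hR5, mem_filter]
  have hsplit : R = insert 2 (insert 3 R5) := by
    ext q
    simp only [hR, hR5, mem_filter, mem_range, mem_insert]
    constructor
    · rintro ⟨hq1, hq2⟩
      by_cases h5 : 5 ≤ q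
      · exact Or.inr (Or.inr ⟨hq1, hq2, h5⟩)
      · interval_cases q <;> first | (exact absurd hq2 (by decide)) | tauto
    · rintro (rfl | rfl | ⟨hq1, hq2, _⟩)
      · exact ⟨by omega, by norm_num⟩
      · exact ⟨by omega, by norm_num⟩
      · exact ⟨hq1, hq2⟩
  have hprodsplit : ∀ S : Finset ℕ, cnt S P = cnt S 2 * (cnt S 3 * ∏ q ∈ R5, cnt S q) := by
    intro S
    rw [hprod S, hsplit, prod_insert h2R5, prod_insert h3R5]
  -- values at the small primes
  have c2_06 : cnt ({0,6} : Finset ℕ) 2 = 1 := by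
    rw [cnt_prime (by norm_num) _]; decide
  have c2_026 : cnt ({0,2,6} : Finset ℕ) 2 = 1 := by
    rw [cnt_prime (by norm_num) _]; decide
  have c2_046 : cnt ({0,4,6} : Finset ℕ) 2 = 1 := by
    rw [cnt_prime (by norm_num) _]; decide
  have c2_0246 : cnt ({0,2,4,6} : Finset ℕ) 2 = 1 := by
    rw [cnt_prime (by norm_num) _]; decide
  have c3_06 : cnt ({0,6} : Finset ℕ) 3 = 2 := by
    rw [cnt_prime (by norm_num) _]; decide
  have c3_026 : cnt ({0,2,6} : Finset ℕ) 3 = 1 := by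
    rw [cnt_prime (by norm_num) _]; decide
  have c3_046 : cnt ({0,4,6} : Finset ℕ) 3 = 1 := by
    rw [cnt_prime (by norm_num) _]; decide
  have c3_0246 : cnt ({0,2,4,6} : Finset ℕ) 3 = 0 := by
    rw [cnt_prime (by norm_num) _]; decide
  -- values at primes ≥ 5
  have c5 : ∀ S : Finset ℕ, S ⊆ {0,2,4,6} → ∀ q ∈ R5, cnt S q = q - S.card := by
    intro S hsub q hq
    obtain ⟨-, hq1, hq2⟩ := mem_filter.mp hq
    rw [cnt_prime hq1 S, card_image_resid hq1 hq2 S hsub]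
  have pA : cnt ({0,6} : Finset ℕ) P = 2 * ∏ q ∈ R5, (q - 2) := by
    rw [hprodsplit, c2_06, c3_06, one_mul]
    congr 1
    refine prod_congr rfl fun q hq => ?_
    rw [c5 _ (by decide) q hq]; rfl
  have pB : cnt ({0,2,6} : Finset ℕ) P = ∏ q ∈ R5, (q - 3) := by
    rw [hprodsplit, c2_026, c3_026, one_mul, one_mul]
    refine prod_congr rfl fun q hq => ?_
    rw [c5 _ (by decide) q hq]; rfl
  have pC : cnt ({0,4,6} : Finset ℕ) P = ∏ q ∈ R5, (q - 3) := by
    rw [hprodsplit, c2_046, c3_046, one_mul, one_mul]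
    refine prod_congr rfl fun q hq => ?_
    rw [c5 _ (by decide) q hq]; rfl
  have pD : cnt ({0,2,4,6} : Finset ℕ) P = 0 := by
    rw [hprodsplit, c2_0246, c3_0246]; ring
  -- cnt as a filter card
  have hcnt_card : ∀ S : Finset ℕ, cnt S P
      = (univ.filter fun x : ZMod P => ∀ s ∈ S, IsUnit (x + (s : ZMod P))).card := by
    intro S
    unfold cnt
    rw [Nat.card_eq_fintype_card, Fintype.card_subtype]
  -- inclusion-exclusion on the finset level
  set s0 : Finset (ZMod P) := univ.filter (fun x => IsUnit x ∧ IsUnit (x + 6)) with hs0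
  have e06 : cnt ({0,6} : Finset ℕ) P = s0.card := by
    rw [hcnt_card, hs0]
    congr 1
    refine filter_congr fun x _ => ?_
    simp only [Finset.forall_mem_insert, Finset.mem_singleton, forall_eq]
    push_cast
    simp [add_zero]
  have e026 : cnt ({0,2,6} : Finset ℕ) P = (s0.filter (fun x => IsUnit (x + 2))).card := by
    rw [hcnt_card, hs0, filter_filter]
    congr 1
    refine filter_congr fun x _ => ?_
    simp only [Finset.forall_mem_insert, Finset.mem_singleton, forall_eq]
    push_cast
    constructor
    · rintro ⟨h0, h2, h6⟩; exact ⟨⟨by simpa using h0, h6⟩, h2⟩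
    · rintro ⟨⟨h0, h6⟩, h2⟩; exact ⟨by simpa using h0, h2, h6⟩
  have e046 : cnt ({0,4,6} : Finset ℕ) P = (s0.filter (fun x => IsUnit (x + 4))).card := by
    rw [hcnt_card, hs0, filter_filter]
    congr 1
    refine filter_congr fun x _ => ?_
    simp only [Finset.forall_mem_insert, Finset.mem_singleton, forall_eq]
    push_cast
    constructor
    · rintro ⟨h0, h4, h6⟩; exact ⟨⟨by simpa using h0, h6⟩, h4⟩
    · rintro ⟨⟨h0, h6⟩, h4⟩; exact ⟨by simpa using h0, h4, h6⟩
  have e0246 : cnt ({0,2,4,6} : Finset ℕ) P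
      = (s0.filter (fun x => IsUnit (x + 2) ∧ IsUnit (x + 4))).card := by
    rw [hcnt_card, hs0, filter_filter]
    congr 1
    refine filter_congr fun x _ => ?_
    simp only [Finset.forall_mem_insert, Finset.mem_singleton, forall_eq]
    push_cast
    constructor
    · rintro ⟨h0, h2, h4, h6⟩; exact ⟨⟨by simpa using h0, h6⟩, h2, h4⟩
    · rintro ⟨⟨h0, h6⟩, h2, h4⟩; exact ⟨by simpa using h0, h2, h4, h6⟩
  have eN : Nat.card {x : ZMod P // IsUnit x ∧ IsUnit (x + 6) ∧
        ¬IsUnit (x + 2) ∧ ¬IsUnit (x + 4)}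
      = (s0.filter (fun x => ¬(IsUnit (x + 2) ∨ IsUnit (x + 4)))).card := by
    rw [Nat.card_eq_fintype_card, Fintype.card_subtype, hs0, filter_filter]
    congr 1
    refine filter_congr fun x _ => ?_
    tauto
  have key1 := card_filter_add_card_filter_not
    (s := s0) (p := fun x => IsUnit (x + 2) ∨ IsUnit (x + 4))
  have key2 := card_union_add_card_inter
    (s0.filter (fun x => IsUnit (x + 2))) (s0.filter (fun x => IsUnit (x + 4)))
  rw [← filter_or, ← filter_and] at key2
  -- put everything together in ℕ
  have main : Nat.card {x : ZMod P // IsUnit x ∧ IsUnit (x + 6) ∧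
        ¬IsUnit (x + 2) ∧ ¬IsUnit (x + 4)}
      + (∏ q ∈ R5, (q - 3)) + (∏ q ∈ R5, (q - 3))
      = 2 * ∏ q ∈ R5, (q - 2) := by
    have hA := pA; rw [e06] at hA
    have hB := pB; rw [e026] at hB
    have hC := pC; rw [e046] at hC
    have hD := pD; rw [e0246] at hD
    rw [eN]
    omega
  -- cast to ℤ
  have cast2 : (∏ q ∈ R5, ((q - 2 : ℕ) : ℤ)) = ∏ q ∈ R5, ((q : ℤ) - 2) := by
    refine prod_congr rfl fun q hq => ?_
    have : 5 ≤ q := (mem_filter.mp hq).2.2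
    rw [Nat.cast_sub (by omega)]
    norm_num
  have cast3 : (∏ q ∈ R5, ((q - 3 : ℕ) : ℤ)) = ∏ q ∈ R5, ((q : ℤ) - 3) := by
    refine prod_congr rfl fun q hq => ?_
    have : 5 ≤ q := (mem_filter.mp hq).2.2
    rw [Nat.cast_sub (by omega)]
    norm_num
  have := congrArg (fun n : ℕ => (n : ℤ)) main
  push_cast at this
  rw [cast2, cast3] at this
  linarith
end
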